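/- Let T ∈ B_{A^{1/2}}(H) be nonzero. Then T is A-invertible in B_{A^{1/2}}(H) if and only if there exist operators S₁, S₂ ∈ B_{A^{1/2}}(H) such that ATS₁ = AS₂T = A. -/

import Mathlib

variable {H : Type*} [NormedAddCommGroup H] [InnerProductSpace ℂ H] [CompleteSpace H]

/-- The semi-norm `‖x‖_A = ⟨Ax, x⟩^{1/2}` induced by a positive operator `A`. -/
noncomputable def anorm (A : H →L[ℂ] H) (x : H) : ℝ :=
  Real.sqrt (RCLike.re (inner ℂ (A x) x : ℂ))

/-- Membership in `B_{A^{1/2}}(H)`: there is `c > 0` with `‖Tx‖_A ≤ c ‖x‖_A` for all `x`. -/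
def MemBA (A T : H →L[ℂ] H) : Prop :=
  ∃ c > 0, ∀ x : H, anorm A (T x) ≤ c * anorm A x

/-- The `A`-operator seminorm `‖T‖_A`: the least `c ≥ 0` with `‖Tx‖_A ≤ c ‖x‖_A` for all `x`. -/
noncomputable def opANorm (A T : H →L[ℂ] H) : ℝ :=
  sInf {c : ℝ | 0 ≤ c ∧ ∀ x : H, anorm A (T x) ≤ c * anorm A x}

/-- `T` is `A`-invertible in `B_{A^{1/2}}(H)`. -/
def AInv (A T : H →L[ℂ] H) : Prop :=
  T ≠ 0 ∧ ∃ S : H →L[ℂ] H, S ≠ 0 ∧ MemBA A S ∧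
    A.comp (T.comp S) = A ∧ A.comp (S.comp T) = A

/-- The `A`-resolvent set `ρ_A(T)`. -/
def rhoA (A T : H →L[ℂ] H) : Set ℂ :=
  {lam : ℂ | AInv A (lam • (1 : H →L[ℂ] H) - T)}

/-- The `A`-spectrum `σ_A(T)`. -/
def sigmaA (A T : H →L[ℂ] H) : Set ℂ := (rhoA A T)ᶜ

/-- The `A`-spectral radius `r_A(T) = inf_{n ≥ 1} ‖T^n‖_A^{1/n}`. -/
noncomputable def rA (A T : H →L[ℂ] H) : ℝ :=
  ⨅ n : ℕ+, (opANorm A (T ^ (n : ℕ))) ^ ((((n : ℕ) : ℝ))⁻¹)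

/-- `sup {|λ| : λ ∈ σ_A(T)}`. -/
noncomputable def supSpecA (A T : H →L[ℂ] H) : ℝ :=
  sSup ((fun z : ℂ => ‖z‖) '' sigmaA A T)

/-- `S` is the `A^{1/2}`-adjoint `T^⋄` of `T`. -/
def IsDiamond (sqrtA T S : H →L[ℂ] H) : Prop :=
  sqrtA.comp S = (ContinuousLinearMap.adjoint T).comp sqrtA ∧
    Set.range (⇑S) ⊆ closure (Set.range (⇑sqrtA))

/-- The orthogonal projection of `H` onto the closure of the range of `A`. -/
noncomputable def projA (A : H →L[ℂ] H) : H →L[ℂ] H :=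
  haveI : CompleteSpace ((LinearMap.range (A : H →ₗ[ℂ] H)).topologicalClosure : Submodule ℂ H) :=
    (Submodule.isClosed_topologicalClosure _).completeSpace_coe
  ((LinearMap.range (A : H →ₗ[ℂ] H)).topologicalClosure.subtypeL).comp
    (Submodule.orthogonalProjectionOnto (LinearMap.range (A : H →ₗ[ℂ] H)).topologicalClosure)

/-!
If `A T S₁ = A S₂ T = A`, then `A S₂ = A S₂ T S₁ = A S₁`: the second equality is `A S₂ T = A`
applied on the range of `S₁`, and the first holds because `T S₁ - 1` maps into `ker A`, which
every `S₂ ∈ B_{A^{1/2}}(H)` preserves (`ker A` is the null space of `‖·‖_A`, as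
`‖x‖_A = ‖A^{1/2} x‖`). Hence `S₁` is an `A`-inverse of `T`; it is nonzero because `A` is.
-/

lemma ContinuousLinearMap.IsPositive.apply_eq_zero_of_re_inner_eq_zero {A : H →L[ℂ] H}
    (hA : A.IsPositive) {x : H} (hx : RCLike.re (inner ℂ (A x) x : ℂ) = 0) : A x = 0 := by
  have hA_nonneg : 0 ≤ A := (ContinuousLinearMap.nonneg_iff_isPositive A).mpr hA
  set B := CFC.sqrt A
  have hBB : B * B = A := CFC.sqrt_mul_sqrt_self A
  have hB : IsSelfAdjoint B := (CFC.sqrt_nonneg A).isSelfAdjoint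
  have hsymm : inner ℂ (B (B x)) x = inner ℂ (B x) (B x) := hB.isSymmetric (B x) x
  have hBx : B x = 0 := by
    rw [← norm_eq_zero, ← sq_eq_zero_iff, ← inner_self_eq_norm_sq (𝕜 := ℂ),
      ← hsymm, ← mul_apply_eq_comp, hBB, hx]
  rw [← hBB, mul_apply_eq_comp, hBx, map_zero]

lemma anorm_eq_zero_iff {A : H →L[ℂ] H} (hA : A.IsPositive) {x : H} :
    anorm A x = 0 ↔ A x = 0 := by
  refine ⟨fun h ↦ hA.apply_eq_zero_of_re_inner_eq_zero ?_, fun h ↦ by simp [anorm, h]⟩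
  exact le_antisymm (Real.sqrt_eq_zero'.mp h) (hA.re_inner_nonneg_left x)

lemma MemBA.apply_eq_zero {A S : H →L[ℂ] H} (hA : A.IsPositive) (hS : MemBA A S) {x : H}
    (hx : A x = 0) : A (S x) = 0 := by
  obtain ⟨c, -, hc⟩ := hS
  rw [← anorm_eq_zero_iff hA] at hx ⊢
  exact le_antisymm (by simpa [hx] using hc x) (Real.sqrt_nonneg _)

lemma comp_leftInv_eq_comp_rightInv {A T S₁ S₂ : H →L[ℂ] H} (hA : A.IsPositive)
    (hS₂ : MemBA A S₂) (h₂ : A.comp (S₂.comp T) = A) (h₁ : A.comp (T.comp S₁) = A) :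
    A.comp S₂ = A.comp S₁ := by
  ext x
  have hker : A (T (S₁ x) - x) = 0 := by
    simpa [sub_eq_zero] using congr($h₁ x)
  have := hS₂.apply_eq_zero hA hker
  rw [map_sub, map_sub, sub_eq_zero] at this
  simpa [← this] using congr($h₂ (S₁ x))

lemma ne_zero_of_comp_comp_eq {R M : Type*} [Semiring R] [AddCommMonoid M] [TopologicalSpace M]
    [Module R M] {A T S : M →L[R] M} (hA0 : A ≠ 0) (h : A.comp (T.comp S) = A) :
    S ≠ 0 := by
  rintro rfl
  exact hA0 (by simpa using h.symm)

theorem stmt17_general (A T : H →L[ℂ] H) (hA : A.IsPositive) (hA0 : A ≠ 0) (hT0 : T ≠ 0) :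
    AInv A T ↔ ∃ S₁ S₂ : H →L[ℂ] H, MemBA A S₁ ∧ MemBA A S₂ ∧
      A.comp (T.comp S₁) = A ∧ A.comp (S₂.comp T) = A := by
  constructor
  · rintro ⟨-, S, -, hS, h₁, h₂⟩
    exact ⟨S, S, hS, hS, h₁, h₂⟩
  · rintro ⟨S₁, S₂, hS₁, hS₂, h₁, h₂⟩
    refine ⟨hT0, S₁, ne_zero_of_comp_comp_eq hA0 h₁, hS₁, h₁, ?_⟩
    rw [← ContinuousLinearMap.comp_assoc, ← comp_leftInv_eq_comp_rightInv hA hS₂ h₂ h₁,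
      ContinuousLinearMap.comp_assoc, h₂]

theorem stmt17 (A T : H →L[ℂ] H) (hA : A.IsPositive) (hA0 : A ≠ 0)
    (hT : MemBA A T) (hT0 : T ≠ 0) :
    AInv A T ↔ ∃ S₁ S₂ : H →L[ℂ] H, MemBA A S₁ ∧ MemBA A S₂ ∧
      A.comp (T.comp S₁) = A ∧ A.comp (S₂.comp T) = A :=
  stmt17_general A T hA hA0 hT0
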